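/- Let L be a positive integer and let p_1, …, p_L be pairwise coprime positive integers. The map from the product ∏_{ℓ=1}^L ZMod p_ℓ to ZMod (∏_{ℓ=1}^L p_ℓ) sending (v_1,…,v_L) to ∑_{ℓ=1}^L v_ℓ · ∏_{ℓ'≠ℓ} p_{ℓ'} (where each v_ℓ is lifted to an integer and the sum is taken modulo ∏_ℓ p_ℓ) is well defined and bijective. -/

import Mathlib

/-!
Reducing the superposed value modulo `p k` kills every summand but the `k`-th, leaving
`v k * ∏_{j ≠ k} p j`, and this cofactor is a unit mod `p k` by pairwise coprimality. So after
the Chinese remainder isomorphism `ZMod (∏ p) ≃ ∏ ZMod (p k)` the map becomes coordinatewise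
multiplication by units, which is bijective.
-/

open Finset Function

namespace ZMod

variable {ι : Type*} [Fintype ι] [DecidableEq ι] (p : ι → ℕ)

def superposition (v : ∀ i, ZMod (p i)) : ZMod (∏ i, p i) :=
  ((∑ i, ((v i).val : ℤ) * ∏ j ∈ univ.erase i, (p j : ℤ) : ℤ) : ZMod (∏ i, p i))

theorem castHom_superposition (k : ι) [NeZero (p k)] (v : ∀ i, ZMod (p i)) :
    castHom (dvd_prod_of_mem p (mem_univ k)) (ZMod (p k)) (superposition p v) =
      v k * ∏ j ∈ univ.erase k, (p j : ZMod (p k)) := by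
  rw [superposition, map_intCast]
  push_cast
  rw [sum_eq_single k]
  · rw [natCast_zmod_val]
  · intro i _ hik
    rw [prod_eq_zero (mem_erase.mpr ⟨Ne.symm hik, mem_univ k⟩) (natCast_self _), mul_zero]
  · simp

theorem isUnit_prod_erase_natCast {p : ι → ℕ} (hcop : Pairwise (Nat.Coprime on p)) (k : ι) :
    IsUnit (∏ j ∈ univ.erase k, (p j : ZMod (p k))) := by
  rw [← Nat.cast_prod, isUnit_iff_coprime]
  exact Nat.Coprime.prod_left fun j hj => hcop (mem_erase.mp hj).1

theorem superposition_bijective [∀ i, NeZero (p i)] (hcop : Pairwise (Nat.Coprime on p)) :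
    Bijective (superposition p) := by
  rw [← (prodEquivPi p hcop).bijective.of_comp_iff']
  have hcrt : prodEquivPi p hcop ∘ superposition p =
      Pi.map fun k x => x * ∏ j ∈ univ.erase k, (p j : ZMod (p k)) := by
    funext v k
    exact (prodEquivPi_apply p hcop _ k).trans (castHom_superposition p k v)
  rw [hcrt]
  exact Bijective.piMap fun k => (isUnit_prod_erase_natCast hcop k).unit.mulRight_bijective

end ZMod

theorem stmt3_general (L : ℕ) (p : Fin L → ℕ) (hp : ∀ ℓ, 0 < p ℓ)
    (hcop : ∀ i j, i ≠ j → Nat.Coprime (p i) (p j)) :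
    Function.Bijective (fun v : ∀ i : Fin L, ZMod (p i) =>
      (((∑ i, ((v i).val : ℤ) * ∏ j ∈ Finset.univ.erase i, (p j : ℤ)) : ℤ) :
        ZMod (∏ ℓ, p ℓ))) := by
  have : ∀ i, NeZero (p i) := fun i => ⟨(hp i).ne'⟩
  exact ZMod.superposition_bijective p fun i j => hcop i j

/-- For pairwise coprime positive moduli `p 1, …, p L`, the simplified superposition map
from `∀ ℓ, ZMod (p ℓ)` to `ZMod (∏ ℓ, p ℓ)` sending `(v 1, …, v L)` to
`∑ ℓ, v ℓ * ∏_{ℓ' ≠ ℓ} p ℓ'` (each `v ℓ` lifted to an integer, sum taken modulo the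
product) is bijective. -/
theorem stmt3 (L : ℕ) (hL : 0 < L) (p : Fin L → ℕ) (hp : ∀ ℓ, 0 < p ℓ)
    (hcop : ∀ i j, i ≠ j → Nat.Coprime (p i) (p j)) :
    Function.Bijective (fun v : ∀ i : Fin L, ZMod (p i) =>
      (((∑ i, ((v i).val : ℤ) * ∏ j ∈ Finset.univ.erase i, (p j : ℤ)) : ℤ) :
        ZMod (∏ ℓ, p ℓ))) :=
  stmt3_general L p hp hcop
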